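/- arXiv:2508.15698 — 4 statements merged into one kernel-verified Lean document; each statement's English description precedes it below -/
import Mathlib

section
/- Let S be a small cube and let f ∈ 𝔽₂^{U*} be the unique element with S ⊆ T_f. Then the image of S under the quotient map composition, namely {φ(u) + W : u ∈ S} ⊆ 𝔽₂^k / W, is the single element ψ(f); equivalently, φ[S] = ψ(f) + W as a coset of W in 𝔽₂^k (where ψ(f) + W denotes the coset of W corresponding to ψ(f) ∈ U = 𝔽₂^k/W). -/
open scoped Classical in
/-- Let `S` be a small cube and `f ∈ 𝔽₂^{U*}` with `S ⊆ T_f`. Then the image of `S`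
under `u ↦ φ(u) + W ∈ 𝔽₂^k/W` is the single element `ψ(f) = ∑_{t ∈ U*} f_t • t`;
that is, `φ[S] = ψ(f) + W` as a coset of `W` in `𝔽₂^k`. -/
theorem statement6 (k d : ℕ) (hk : 1 ≤ k)
    (X : Finset (Fin k → ZMod 2)) (hX0 : (0 : Fin k → ZMod 2) ∉ X)
    (hXcard : X.card = d)
    (D : Finset (Fin k → ZMod 2)) (hDX : D ⊆ X)
    (W : Submodule (ZMod 2) (Fin k → ZMod 2))
    (hW : W = Submodule.span (ZMod 2) (D : Set (Fin k → ZMod 2)))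
    (spanB : Submodule (ZMod 2) ({x // x ∈ X} → ZMod 2))
    (hspanB : spanB = Submodule.span (ZMod 2)
      {v | ∃ x : {x // x ∈ X}, (x : Fin k → ZMod 2) ∈ D ∧ v = Pi.single x (1 : ZMod 2)})
    (S : Set ({x // x ∈ X} → ZMod 2)) (hS : ∃ u₀, S = {v | v - u₀ ∈ spanB})
    (f : {t : (Fin k → ZMod 2) ⧸ W // t ≠ 0} → ZMod 2)
    (hf : S ⊆ {u | ∀ t : {t : (Fin k → ZMod 2) ⧸ W // t ≠ 0},
      (∑ x : {x // x ∈ X},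
        if (Submodule.Quotient.mk (x : Fin k → ZMod 2) : (Fin k → ZMod 2) ⧸ W)
            = (t : (Fin k → ZMod 2) ⧸ W)
        then u x else 0) = f t}) :
    (fun u : {x // x ∈ X} → ZMod 2 =>
        (Submodule.Quotient.mk (∑ x : {x // x ∈ X}, u x • (x : Fin k → ZMod 2)) :
          (Fin k → ZMod 2) ⧸ W)) '' S
      = {∑ t : (Fin k → ZMod 2) ⧸ W, if ht : t ≠ 0 then f ⟨t, ht⟩ • t else 0} := by
  obtain ⟨u₀, rfl⟩ := hS
  have hu₀ : u₀ ∈ {v | v - u₀ ∈ spanB} := by simp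
  have key : ∀ u ∈ {v | v - u₀ ∈ spanB},
      (Submodule.Quotient.mk (∑ x : {x // x ∈ X}, u x • (x : Fin k → ZMod 2)) :
          (Fin k → ZMod 2) ⧸ W)
        = ∑ t : (Fin k → ZMod 2) ⧸ W, if ht : t ≠ 0 then f ⟨t, ht⟩ • t else 0 := by
    intro u hu
    have h1 : (Submodule.Quotient.mk (∑ x : {x // x ∈ X}, u x • (x : Fin k → ZMod 2)) :
          (Fin k → ZMod 2) ⧸ W)
        = ∑ x : {x // x ∈ X}, u x •
            (Submodule.Quotient.mk (x : Fin k → ZMod 2) : (Fin k → ZMod 2) ⧸ W) := by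
      simp [← Submodule.mkQ_apply, map_sum, map_smul]
    rw [h1]
    rw [← Finset.sum_fiberwise Finset.univ
      (fun x : {x // x ∈ X} =>
        (Submodule.Quotient.mk (x : Fin k → ZMod 2) : (Fin k → ZMod 2) ⧸ W))
      (fun x : {x // x ∈ X} => u x •
        (Submodule.Quotient.mk (x : Fin k → ZMod 2) : (Fin k → ZMod 2) ⧸ W))]
    refine Finset.sum_congr rfl fun t _ => ?_
    by_cases ht : t = 0
    · subst ht
      simp only [dif_neg (fun h : (0 : (Fin k → ZMod 2) ⧸ W) ≠ 0 => h rfl)]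
      refine Finset.sum_eq_zero fun x hx => ?_
      rw [Finset.mem_filter] at hx
      rw [hx.2]
      simp
    · rw [dif_pos ht]
      have hsum := hf hu ⟨t, ht⟩
      calc ∑ x ∈ Finset.univ.filter (fun x : {x // x ∈ X} =>
              (Submodule.Quotient.mk (x : Fin k → ZMod 2) : (Fin k → ZMod 2) ⧸ W) = t),
            u x • (Submodule.Quotient.mk (x : Fin k → ZMod 2) : (Fin k → ZMod 2) ⧸ W)
          = ∑ x ∈ Finset.univ.filter (fun x : {x // x ∈ X} =>
              (Submodule.Quotient.mk (x : Fin k → ZMod 2) : (Fin k → ZMod 2) ⧸ W) = t),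
            u x • t := by
            refine Finset.sum_congr rfl fun x hx => ?_
            rw [(Finset.mem_filter.mp hx).2]
        _ = (∑ x ∈ Finset.univ.filter (fun x : {x // x ∈ X} =>
              (Submodule.Quotient.mk (x : Fin k → ZMod 2) : (Fin k → ZMod 2) ⧸ W) = t),
            u x) • t := by rw [Finset.sum_smul]
        _ = f ⟨t, ht⟩ • t := by
            rw [← hsum, Finset.sum_filter]
  ext y
  simp only [Set.mem_image, Set.mem_singleton_iff]
  constructor
  · rintro ⟨u, hu, rfl⟩
    exact key u hu
  · intro hy
    exact ⟨u₀, hu₀, by rw [key u₀ hu₀, hy]⟩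
end

section
/- Let S be a small cube and let f ∈ 𝔽₂^{U*} be the unique element with S ⊆ T_f. Then S ∩ C is nonempty if and only if ψ(f) = 0 in U. -/
/-!
For `u₀ ∈ S` the element `ψ(f)` is the image of `φ(u₀)` in `U = 𝔽₂^k / W`: grouping the terms of
`φ(u₀) = ∑ₓ u₀ₓ • x` by the coset of `x` gives `∑ₜ fₜ • t`. Moreover `φ` maps the direction of the
cube `S` onto `W = span D`. Hence `S = u₀ + span{b(x) : x ∈ D}` meets `ker φ` iff `φ(u₀) ∈ W`,
i.e. iff `ψ(f) = 0`.
-/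

section CosetKernel

variable {R M N : Type*} [Ring R] [AddCommGroup M] [AddCommGroup N] [Module R M] [Module R N]

theorem LinearMap.exists_sub_mem_and_eq_zero_iff (g : M →ₗ[R] N) (P : Submodule R M) (u₀ : M) :
    (∃ v, v - u₀ ∈ P ∧ g v = 0) ↔ g u₀ ∈ P.map g := by
  constructor
  · rintro ⟨v, hv, hgv⟩
    exact ⟨u₀ - v, by simpa using P.neg_mem hv, by simp [hgv]⟩
  · rintro ⟨w, hw, hgw⟩
    exact ⟨u₀ - w, by simpa using P.neg_mem hw, by simp [hgw]⟩

end CosetKernel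

section LinearCombination

variable {ι R M : Type*} [Fintype ι] [Semiring R] [AddCommMonoid M] [Module R M]

theorem Fintype.map_span_single_linearCombination [DecidableEq ι] (v : ι → M) (s : Set ι) :
    (Submodule.span R ((fun i => Pi.single i (1 : R)) '' s)).map
      (Fintype.linearCombination R v) = Submodule.span R (v '' s) := by
  rw [Submodule.map_span, Set.image_image]
  simp only [Fintype.linearCombination_apply_single, one_smul]

/-- The right side is `∑ x, u x • q (v x)`; the left side groups its terms by the value of
`q (v x)`. -/
theorem sum_smul_fiberwise_eq_map_linearCombination {Q : Type*} [Fintype Q] [DecidableEq Q]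
    [AddCommMonoid Q] [Module R Q] (q : M →ₗ[R] Q) (v : ι → M) (u : ι → R) :
    ∑ t : Q, (∑ x, if q (v x) = t then u x else 0) • t =
      q (Fintype.linearCombination R v u) := by
  simp only [Finset.sum_smul, ite_smul, zero_smul, Fintype.linearCombination_apply, map_sum,
    map_smul]
  rw [Finset.sum_comm]
  simp

open scoped Classical in
theorem statement7_general (k : ℕ)
    (X : Finset (Fin k → ZMod 2))
    (D : Finset (Fin k → ZMod 2)) (hDX : D ⊆ X)
    (W : Submodule (ZMod 2) (Fin k → ZMod 2))
    (hW : W = Submodule.span (ZMod 2) (D : Set (Fin k → ZMod 2)))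
    (spanB : Submodule (ZMod 2) ({x // x ∈ X} → ZMod 2))
    (hspanB : spanB = Submodule.span (ZMod 2)
      {v | ∃ x : {x // x ∈ X}, (x : Fin k → ZMod 2) ∈ D ∧ v = Pi.single x (1 : ZMod 2)})
    (S : Set ({x // x ∈ X} → ZMod 2)) (hS : ∃ u₀, S = {v | v - u₀ ∈ spanB})
    (f : {t : (Fin k → ZMod 2) ⧸ W // t ≠ 0} → ZMod 2)
    (hf : S ⊆ {u | ∀ t : {t : (Fin k → ZMod 2) ⧸ W // t ≠ 0},
      (∑ x : {x // x ∈ X},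
        if (Submodule.Quotient.mk (x : Fin k → ZMod 2) : (Fin k → ZMod 2) ⧸ W)
            = (t : (Fin k → ZMod 2) ⧸ W)
        then u x else 0) = f t}) :
    (S ∩ {u : {x // x ∈ X} → ZMod 2 |
        ∑ x : {x // x ∈ X}, u x • (x : Fin k → ZMod 2) = 0}).Nonempty ↔
      (∑ t : (Fin k → ZMod 2) ⧸ W, if ht : t ≠ 0 then f ⟨t, ht⟩ • t else 0) = 0 := by
  obtain ⟨u₀, rfl⟩ := hS
  set φ := Fintype.linearCombination (ZMod 2) (fun x : {x // x ∈ X} => (x : Fin k → ZMod 2))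
  have hfu₀ := hf (show u₀ - u₀ ∈ spanB by simp)
  have hψ : (∑ t : (Fin k → ZMod 2) ⧸ W, if ht : t ≠ 0 then f ⟨t, ht⟩ • t else 0) =
      W.mkQ (φ u₀) := by
    rw [← sum_smul_fiberwise_eq_map_linearCombination]
    refine Finset.sum_congr rfl fun t _ => ?_
    by_cases ht : t = 0
    · simp [ht]
    · rw [dif_pos ht, ← hfu₀ ⟨t, ht⟩]
      rfl
  have himg : spanB.map φ = W := by
    have hgen :
        {v | ∃ x : {x // x ∈ X}, (x : Fin k → ZMod 2) ∈ D ∧ v = Pi.single x (1 : ZMod 2)} =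
          (fun x : {x // x ∈ X} => Pi.single x (1 : ZMod 2)) '' {x | (x : Fin k → ZMod 2) ∈ D} := by
      ext v; simp [eq_comm]
    have hD : (fun x : {x // x ∈ X} => (x : Fin k → ZMod 2)) '' {x | (x : Fin k → ZMod 2) ∈ D} =
        D := by
      ext y; simpa using fun hy => hDX hy
    rw [hspanB, hgen, Fintype.map_span_single_linearCombination, hD, hW]
  rw [hψ, Submodule.mkQ_apply, Submodule.Quotient.mk_eq_zero, ← himg,
    ← LinearMap.exists_sub_mem_and_eq_zero_iff]
  rfl

open scoped Classical in
/-- Let `S` be a small cube and `f ∈ 𝔽₂^{U*}` the unique element with `S ⊆ T_f`.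
Then `S` meets the Hamming code `C = {u : φ(u) = 0}` if and only if
`ψ(f) = ∑_{t ∈ U*} f_t • t = 0` in `U = 𝔽₂^k/W`. -/
theorem statement7 (k d : ℕ) (hk : 1 ≤ k)
    (X : Finset (Fin k → ZMod 2)) (hX0 : (0 : Fin k → ZMod 2) ∉ X)
    (hXcard : X.card = d)
    (D : Finset (Fin k → ZMod 2)) (hDX : D ⊆ X)
    (W : Submodule (ZMod 2) (Fin k → ZMod 2))
    (hW : W = Submodule.span (ZMod 2) (D : Set (Fin k → ZMod 2)))
    (spanB : Submodule (ZMod 2) ({x // x ∈ X} → ZMod 2))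
    (hspanB : spanB = Submodule.span (ZMod 2)
      {v | ∃ x : {x // x ∈ X}, (x : Fin k → ZMod 2) ∈ D ∧ v = Pi.single x (1 : ZMod 2)})
    (S : Set ({x // x ∈ X} → ZMod 2)) (hS : ∃ u₀, S = {v | v - u₀ ∈ spanB})
    (f : {t : (Fin k → ZMod 2) ⧸ W // t ≠ 0} → ZMod 2)
    (hf : S ⊆ {u | ∀ t : {t : (Fin k → ZMod 2) ⧸ W // t ≠ 0},
      (∑ x : {x // x ∈ X},
        if (Submodule.Quotient.mk (x : Fin k → ZMod 2) : (Fin k → ZMod 2) ⧸ W)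
            = (t : (Fin k → ZMod 2) ⧸ W)
        then u x else 0) = f t}) :
    (S ∩ {u : {x // x ∈ X} → ZMod 2 |
        ∑ x : {x // x ∈ X}, u x • (x : Fin k → ZMod 2) = 0}).Nonempty ↔
      (∑ t : (Fin k → ZMod 2) ⧸ W, if ht : t ≠ 0 then f ⟨t, ht⟩ • t else 0) = 0 :=
  statement7_general k X D hDX W hW spanB hspanB S hS f hf
end LinearCombination
end

section
/- Let d ≥ 3000 and k = ⌈log₂(d+1)⌉, let X ⊆ 𝔽₂^k \ {0} have size d, let D ⊆ X have |D| ≥ 45k, and assume condition (A) holds. Then for every f ∈ 𝔽₂^{U*} one has |T_f| ≥ 2^{d(1 − 2/log₂ d)}. -/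
set_option maxHeartbeats 1000000 in
open scoped Classical in
/-- Let `d ≥ 3000`, `k = ⌈log₂(d+1)⌉`, `X ⊆ 𝔽₂^k \ {0}` of size `d`, and `D ⊆ X`
with `|D| ≥ 45k`; assume condition (A) (every nonzero coset of `W = span D` contains
an element of `X`). Then every set `T_f` (`f ∈ 𝔽₂^{U*}`) satisfies
`|T_f| ≥ 2^(d(1 - 2/log₂ d))`. -/
theorem statement10 (d k : ℕ) (hd : 3000 ≤ d) (hkd : k = Nat.clog 2 (d + 1))
    (X : Finset (Fin k → ZMod 2)) (hX0 : (0 : Fin k → ZMod 2) ∉ X)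
    (hXcard : X.card = d)
    (D : Finset (Fin k → ZMod 2)) (hDX : D ⊆ X) (hDcard : 45 * k ≤ D.card)
    (W : Submodule (ZMod 2) (Fin k → ZMod 2))
    (hW : W = Submodule.span (ZMod 2) (D : Set (Fin k → ZMod 2)))
    (hA : ∀ t : (Fin k → ZMod 2) ⧸ W, t ≠ 0 →
      ∃ x ∈ X, (Submodule.Quotient.mk x : (Fin k → ZMod 2) ⧸ W) = t)
    (f : {t : (Fin k → ZMod 2) ⧸ W // t ≠ 0} → ZMod 2) :
    (2 : ℝ) ^ ((d : ℝ) * (1 - 2 / Real.logb 2 (d : ℝ))) ≤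
      (Nat.card {u : {x // x ∈ X} → ZMod 2 |
        ∀ t : {t : (Fin k → ZMod 2) ⧸ W // t ≠ 0},
          (∑ x : {x // x ∈ X},
            if (Submodule.Quotient.mk (x : Fin k → ZMod 2) : (Fin k → ZMod 2) ⧸ W)
                = (t : (Fin k → ZMod 2) ⧸ W)
            then u x else 0) = f t} : ℝ) := by
  classical
  haveI : Finite ((Fin k → ZMod 2) ⧸ W) := Quotient.finite _
  have hr' : ∀ t : {t : (Fin k → ZMod 2) ⧸ W // t ≠ 0}, ∃ x : {x // x ∈ X},
      (Submodule.Quotient.mk (x : Fin k → ZMod 2) : (Fin k → ZMod 2) ⧸ W) = (t : _) := by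
    intro t
    obtain ⟨x, hx, hxt⟩ := hA t t.2
    exact ⟨⟨x, hx⟩, hxt⟩
  choose r hr using hr'
  have hrinj : Function.Injective r := by
    intro t₁ t₂ h
    apply Subtype.ext
    rw [← hr t₁, ← hr t₂, h]
  set m := Nat.card {t : (Fin k → ZMod 2) ⧸ W // t ≠ 0} with hm
  set q := Nat.card ((Fin k → ZMod 2) ⧸ W) with hq
  set T : Set ({x // x ∈ X} → ZMod 2) := {u |
        ∀ t : {t : (Fin k → ZMod 2) ⧸ W // t ≠ 0},
          (∑ x : {x // x ∈ X},
            if (Submodule.Quotient.mk (x : Fin k → ZMod 2) : (Fin k → ZMod 2) ⧸ W)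
                = (t : (Fin k → ZMod 2) ⧸ W)
            then u x else 0) = f t} with hT
  have key : 2 ^ (d - m) ≤ Nat.card T := by
    set v : ({x : {x // x ∈ X} // x ∉ Set.range r} → ZMod 2) → ({x // x ∈ X} → ZMod 2) :=
      fun u x => if h : x ∈ Set.range r then 0 else u ⟨x, h⟩ with hv
    set F : ({x : {x // x ∈ X} // x ∉ Set.range r} → ZMod 2) → ({x // x ∈ X} → ZMod 2) :=
      fun u x => v u x + (if h : ∃ t, r t = x then
        (f h.choose - ∑ y : {x // x ∈ X},
          if (Submodule.Quotient.mk (y : Fin k → ZMod 2) : (Fin k → ZMod 2) ⧸ W)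
            = (h.choose : (Fin k → ZMod 2) ⧸ W) then v u y else 0)
        else 0) with hF
    have hFmem : ∀ u, F u ∈ T := by
      intro u t
      have split : (∑ x : {x // x ∈ X},
            if (Submodule.Quotient.mk (x : Fin k → ZMod 2) : (Fin k → ZMod 2) ⧸ W) = (t : _)
            then F u x else 0) =
          (∑ x : {x // x ∈ X},
            if (Submodule.Quotient.mk (x : Fin k → ZMod 2) : (Fin k → ZMod 2) ⧸ W) = (t : _)
            then v u x else 0) +
          (∑ x : {x // x ∈ X},
            if (Submodule.Quotient.mk (x : Fin k → ZMod 2) : (Fin k → ZMod 2) ⧸ W) = (t : _)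
            then (if h : ∃ t', r t' = x then
                (f h.choose - ∑ y : {x // x ∈ X},
                  if (Submodule.Quotient.mk (y : Fin k → ZMod 2) : (Fin k → ZMod 2) ⧸ W)
                    = (h.choose : _) then v u y else 0)
                else 0) else 0) := by
        rw [← Finset.sum_add_distrib]
        apply Finset.sum_congr rfl
        intro x _
        by_cases hx : (Submodule.Quotient.mk (x : Fin k → ZMod 2) : (Fin k → ZMod 2) ⧸ W) = (t : _)
          <;> simp [hx, hF]
      rw [split]
      have hsingle : (∑ x : {x // x ∈ X},
            if (Submodule.Quotient.mk (x : Fin k → ZMod 2) : (Fin k → ZMod 2) ⧸ W) = (t : _)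
            then (if h : ∃ t', r t' = x then
                (f h.choose - ∑ y : {x // x ∈ X},
                  if (Submodule.Quotient.mk (y : Fin k → ZMod 2) : (Fin k → ZMod 2) ⧸ W)
                    = (h.choose : _) then v u y else 0)
                else 0) else 0) =
          f t - ∑ y : {x // x ∈ X},
            if (Submodule.Quotient.mk (y : Fin k → ZMod 2) : (Fin k → ZMod 2) ⧸ W) = (t : _)
            then v u y else 0 := by
        rw [Finset.sum_eq_single (r t)]
        · rw [if_pos (hr t)]
          have hex : ∃ t', r t' = r t := ⟨t, rfl⟩
          rw [dif_pos hex]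
          have : hex.choose = t := hrinj hex.choose_spec
          rw [this]
        · intro y _ hy
          by_cases hmem : (Submodule.Quotient.mk (y : Fin k → ZMod 2) : (Fin k → ZMod 2) ⧸ W)
              = (t : _)
          · rw [if_pos hmem]
            by_cases hex : ∃ t', r t' = y
            · exfalso
              have h1 : (hex.choose : (Fin k → ZMod 2) ⧸ W) = (t : _) := by
                rw [← hr hex.choose, hex.choose_spec]; exact hmem
              have h2 : hex.choose = t := Subtype.ext h1
              exact hy (by rw [← hex.choose_spec, h2])
            · rw [dif_neg hex]
          · rw [if_neg hmem]
        · intro h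
          exact absurd (Finset.mem_univ _) h
      rw [hsingle]
      ring
    have hFinj : Function.Injective F := by
      intro u₁ u₂ h
      funext x
      have hx := congrFun h x.1
      have hnr : x.1 ∉ Set.range r := x.2
      have hnex : ¬ ∃ t, r t = x.1 := by
        rintro ⟨t, ht⟩; exact hnr ⟨t, ht⟩
      simp only [hF, hv, dif_neg hnex, dif_neg hnr, add_zero] at hx
      exact hx
    have hinj2 : Function.Injective (fun u => (⟨F u, hFmem u⟩ : T)) := by
      intro u₁ u₂ h
      exact hFinj (congrArg Subtype.val h)
    have hle := Nat.card_le_card_of_injective _ hinj2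
    have hcard_dom : Nat.card ({x : {x // x ∈ X} // x ∉ Set.range r} → ZMod 2)
        = 2 ^ (d - m) := by
      rw [Nat.card_fun]
      congr 1
      · exact Nat.card_zmod 2
      · have h1 : Nat.card {x : {x // x ∈ X} // x ∉ Set.range r}
            = Nat.card {x // x ∈ X} - Nat.card {x : {x // x ∈ X} // x ∈ Set.range r} := by
          haveI : Fintype {x // x ∈ X} := FinsetCoe.fintype X
          rw [Nat.card_eq_fintype_card, Nat.card_eq_fintype_card, Nat.card_eq_fintype_card]
          exact Fintype.card_subtype_compl _
        rw [h1]
        have h2 : Nat.card {x // x ∈ X} = d := by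
          rw [Nat.card_eq_fintype_card, Fintype.card_coe, hXcard]
        have h3 : Nat.card {x : {x // x ∈ X} // x ∈ Set.range r} = m := by
          rw [hm]
          exact Nat.card_range_of_injective hrinj
        rw [h2, h3]
    rw [← hcard_dom]
    exact hle
  -- numeric facts
  haveI : Fintype ((Fin k → ZMod 2) ⧸ W) := Fintype.ofFinite _
  have hcardV : Nat.card (Fin k → ZMod 2) = 2 ^ k := by
    rw [Nat.card_fun, Nat.card_zmod, Nat.card_eq_fintype_card, Fintype.card_fin]
  have hqW : q * Nat.card W = 2 ^ k := by
    rw [hq, ← hcardV]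
    rw [mul_comm]
    exact (Submodule.card_eq_card_quotient_mul_card W).symm
  have hmq : m + 1 = q := by
    rw [hm, hq, Nat.card_eq_fintype_card, Nat.card_eq_fintype_card]
    have h1 : Fintype.card {t : (Fin k → ZMod 2) ⧸ W // t ≠ 0}
        = Fintype.card ((Fin k → ZMod 2) ⧸ W) - Fintype.card {t : (Fin k → ZMod 2) ⧸ W // t = 0} :=
      Fintype.card_subtype_compl _
    have h2 : Fintype.card {t : (Fin k → ZMod 2) ⧸ W // t = 0} = 1 := Fintype.card_subtype_eq 0
    have h3 : 1 ≤ Fintype.card ((Fin k → ZMod 2) ⧸ W) := Fintype.card_pos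
    omega
  have hWcard : 45 * k + 1 ≤ Nat.card W := by
    have h0D : (0 : Fin k → ZMod 2) ∉ D := fun h => hX0 (hDX h)
    have hsub : ((insert (0 : Fin k → ZMod 2) D : Finset _) : Set (Fin k → ZMod 2))
        ⊆ (W : Set (Fin k → ZMod 2)) := by
      intro x hx
      simp only [Finset.coe_insert, Set.mem_insert_iff, Finset.mem_coe] at hx
      rcases hx with rfl | hx
      · exact W.zero_mem
      · rw [hW]; exact Submodule.subset_span hx
    calc 45 * k + 1 ≤ D.card + 1 := by omega
      _ = (insert (0 : Fin k → ZMod 2) D).card := (Finset.card_insert_of_notMem h0D).symm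
      _ = ((insert (0 : Fin k → ZMod 2) D : Finset _) : Set (Fin k → ZMod 2)).ncard :=
          (Set.ncard_coe_finset _).symm
      _ ≤ (W : Set (Fin k → ZMod 2)).ncard := Set.ncard_le_ncard hsub (Set.toFinite _)
      _ = Nat.card W := (Nat.card_coe_set_eq _).symm
  have hk1 : 1 ≤ k := by
    rw [hkd]
    exact Nat.clog_pos (by norm_num) (by omega)
  have h2k : 2 ^ k ≤ 2 * d := by
    have h1 : 2 ^ (k - 1) < d + 1 := by
      rw [hkd]
      exact Nat.pow_pred_clog_lt_self (by norm_num) (by omega)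
    have h2 : 2 ^ k = 2 * 2 ^ (k - 1) := by
      conv_lhs => rw [show k = (k - 1) + 1 by omega]
      ring
    omega
  have hdk : d + 1 ≤ 2 ^ k := by
    rw [hkd]
    exact Nat.le_pow_clog (by norm_num) _
  -- key nat inequality
  have hnat : (m + 1) * (45 * k + 1) ≤ 2 * d := by
    calc (m + 1) * (45 * k + 1) ≤ q * Nat.card W :=
          Nat.mul_le_mul (le_of_eq hmq) hWcard
      _ = 2 ^ k := hqW
      _ ≤ 2 * d := h2k
  have hmk : m * k ≤ 2 * d := by nlinarith
  have hmd : m ≤ d := by nlinarith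
  -- real analysis
  have hlogpos : (0 : ℝ) < Real.logb 2 d := by
    apply Real.logb_pos (by norm_num)
    have : (3000 : ℝ) ≤ (d : ℝ) := by exact_mod_cast hd
    linarith
  have hklog : Real.logb 2 (d : ℝ) ≤ (k : ℝ) := by
    rw [Real.logb_le_iff_le_rpow (by norm_num) (by positivity)]
    have : (d : ℝ) ≤ ((2 ^ k : ℕ) : ℝ) := by exact_mod_cast Nat.le_of_succ_le hdk
    calc (d : ℝ) ≤ ((2 ^ k : ℕ) : ℝ) := this
      _ = (2 : ℝ) ^ (k : ℝ) := by rw [Real.rpow_natCast]; push_cast; ring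
  have hmreal : (m : ℝ) * Real.logb 2 (d : ℝ) ≤ 2 * d := by
    have h1 : (m : ℝ) * Real.logb 2 (d : ℝ) ≤ (m : ℝ) * (k : ℝ) := by
      apply mul_le_mul_of_nonneg_left hklog (by positivity)
    have h2 : (m : ℝ) * (k : ℝ) ≤ 2 * d := by exact_mod_cast hmk
    linarith
  have hexp : (d : ℝ) * (1 - 2 / Real.logb 2 (d : ℝ)) ≤ ((d - m : ℕ) : ℝ) := by
    rw [Nat.cast_sub hmd]
    have h1 : (m : ℝ) ≤ 2 * d / Real.logb 2 (d : ℝ) := by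
      rw [le_div_iff₀ hlogpos]
      linarith
    have h2 : (d : ℝ) * (1 - 2 / Real.logb 2 (d : ℝ))
        = (d : ℝ) - 2 * d / Real.logb 2 (d : ℝ) := by
      field_simp
    rw [h2]
    linarith
  calc (2 : ℝ) ^ ((d : ℝ) * (1 - 2 / Real.logb 2 (d : ℝ)))
      ≤ (2 : ℝ) ^ (((d - m : ℕ) : ℝ)) := Real.rpow_le_rpow_of_exponent_le one_le_two hexp
    _ = ((2 ^ (d - m) : ℕ) : ℝ) := by rw [Real.rpow_natCast]; push_cast; ring
    _ ≤ (Nat.card T : ℝ) := by exact_mod_cast key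
end

section
/- Assume condition (A) holds, and let H be a spanning subgraph of Q_X satisfying: (i) any two vertices lying in a common small cube belong to the same connected component of H; and (ii) for every small cube S with S ∩ C ≠ ∅ and every x ∈ X, there is an edge of H joining a vertex of S to a vertex of the translated small cube S + b(x). Then for every f ∈ 𝔽₂^{U*}, any two vertices of T_f belong to the same connected component of H. -/
/-!
Let `ψ(u)` be the class of `φ(u)` in `𝔽₂^k / W`. Since `φ` maps the directions of a small cube
onto `W`, the small cube through `w` meets `C` exactly when `ψ(w) = 0`; for such `w`, (ii) and (i)
join `w` to `w + b(x)` for every `x`, and so every `w` with `ψ(w) = [x]` is joined to `w + b(x)`.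
Hence the translations `g` with `ψ(g) = 0` that keep every vertex of `ψ⁻¹(0)` in its component
form a group containing `b(x)` for `[x] = 0` and `b(x) + b(y)` for `[x] = [y]`. These generate
all `g` whose sums over the classes `L_t`, `t ≠ 0`, vanish, such as `v - u` for `u, v ∈ T_f`.
By (A), one edge moves `u` and `v` into `ψ⁻¹(0)`, where this group acts.
-/

/-- The hypercube graph on vertex set `𝔽₂^X`. -/
def hypercube (X : Type*) [Fintype X] [DecidableEq X] : SimpleGraph (X → ZMod 2) where
  Adj u v := hammingDist u v = 1
  symm := ⟨fun u v h => by rwa [hammingDist_comm]⟩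
  loopless := ⟨fun u h => by simp [hammingDist_self] at h⟩

theorem mem_of_fiber_sums_eq_zero {ι Q R : Type*} [Fintype ι] [DecidableEq ι] [Zero Q]
    [DecidableEq Q] [Ring R] (c : ι → Q) (N : Submodule R (ι → R))
    (hzero : ∀ i, c i = 0 → Pi.single i 1 ∈ N)
    (hpair : ∀ i j, c i = c j → Pi.single i 1 - Pi.single j 1 ∈ N)
    {v : ι → R} (hv : ∀ t ≠ 0, ∑ i, (if c i = t then v i else 0) = 0) : v ∈ N := by
  -- modulo `N`, `Pi.single i 1` vanishes if `c i = 0` and otherwise depends only on `c i`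
  rw [← Submodule.Quotient.mk_eq_zero]
  have hfiber : ∀ t ∈ Finset.univ.image c,
      ∑ i ∈ Finset.univ.filter (c · = t), v i • N.mkQ (Pi.single i 1) = 0 := by
    intro t ht
    obtain ⟨i₀, -, rfl⟩ := Finset.mem_image.mp ht
    by_cases h0 : c i₀ = 0
    · refine Finset.sum_eq_zero fun i hi => ?_
      rw [Submodule.mkQ_apply,
        (Submodule.Quotient.mk_eq_zero N).mpr (hzero i ((Finset.mem_filter.mp hi).2.trans h0)),
        smul_zero]
    · have hconst : ∀ i ∈ Finset.univ.filter (c · = c i₀),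
          v i • N.mkQ (Pi.single i 1) = v i • N.mkQ (Pi.single i₀ 1) := fun i hi => by
        rw [Submodule.mkQ_apply, Submodule.mkQ_apply,
          (Submodule.Quotient.eq N).mpr (hpair i i₀ (Finset.mem_filter.mp hi).2)]
      rw [Finset.sum_congr rfl hconst, ← Finset.sum_smul, Finset.sum_filter, hv _ h0, zero_smul]
  calc Submodule.Quotient.mk v
      = ∑ i, v i • N.mkQ (Pi.single i 1) := by
        conv_lhs => rw [← Finset.univ_sum_single v]
        simp only [← Submodule.mkQ_apply, map_sum, ← map_smul, ← Pi.single_smul', smul_eq_mul,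
          mul_one]
    _ = 0 := by
        rw [← Finset.sum_fiberwise_of_maps_to
          (fun i _ => Finset.mem_image_of_mem c (Finset.mem_univ i))]
        exact Finset.sum_eq_zero hfiber

theorem map_linearCombination_span_single {ι R M : Type*} [Fintype ι] [DecidableEq ι]
    [Semiring R] [AddCommMonoid M] [Module R M] (b : ι → M) (D : Set M)
    (hD : D ⊆ Set.range b) :
    (Submodule.span R {w | ∃ i, b i ∈ D ∧ w = Pi.single i 1}).map
      (Fintype.linearCombination R b) = Submodule.span R D := by
  rw [Submodule.map_span]
  congr 1
  ext y
  simp only [Set.mem_image, Set.mem_ofPred_eq]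
  constructor
  · rintro ⟨_, ⟨i, hi, rfl⟩, rfl⟩
    rwa [Fintype.linearCombination_apply_single, one_smul]
  · intro hy
    obtain ⟨i, rfl⟩ := hD hy
    exact ⟨_, ⟨i, hy, rfl⟩, by rw [Fintype.linearCombination_apply_single, one_smul]⟩

def reachableShifts {G : Type*} [AddCommGroup G] (H : SimpleGraph G) (Z : AddSubgroup G) :
    AddSubgroup G where
  carrier := {g | g ∈ Z ∧ ∀ w ∈ Z, H.Reachable w (w + g)}
  zero_mem' := ⟨Z.zero_mem, fun w _ => by rw [add_zero]⟩
  add_mem' := fun {g g'} ⟨hg, hgr⟩ ⟨hg', hg'r⟩ => ⟨Z.add_mem hg hg', fun w hw => by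
    simpa only [add_assoc] using (hgr w hw).trans (hg'r (w + g) (Z.add_mem hw hg))⟩
  neg_mem' := fun {g} ⟨hg, hgr⟩ => ⟨Z.neg_mem hg, fun w hw => by
    simpa only [← sub_eq_add_neg, sub_add_cancel] using (hgr (w - g) (Z.sub_mem hw hg)).symm⟩

def SmallCubesConnected {ι R : Type*} [Ring R] (H : SimpleGraph (ι → R))
    (E : Submodule R (ι → R)) : Prop :=
  ∀ u v, u - v ∈ E → H.Reachable u v

def SmallCubesLinked {ι R V : Type*} [DecidableEq ι] [Ring R] [AddCommGroup V] [Module R V]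
    (H : SimpleGraph (ι → R)) (E : Submodule R (ι → R)) (φ : (ι → R) →ₗ[R] V) : Prop :=
  ∀ S : Set (ι → R), (∃ u₀, S = {v | v - u₀ ∈ E}) →
    (S ∩ LinearMap.ker φ).Nonempty → ∀ x, ∃ u ∈ S, ∃ w ∈ S, H.Adj u (w + Pi.single x 1)

section SmallCubes

variable {ι R V : Type*} [DecidableEq ι] [Ring R] [AddCommGroup V] [Module R V]
  {φ : (ι → R) →ₗ[R] V} {E : Submodule R (ι → R)} {H : SimpleGraph (ι → R)}

theorem reachable_add_single_of_mem_map (hi : SmallCubesConnected H E)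
    (hii : SmallCubesLinked H E φ)
    {w : ι → R} (hw : φ w ∈ E.map φ) (x : ι) : H.Reachable w (w + Pi.single x 1) := by
  -- `φ w ∈ φ(E)` says that the small cube through `w` meets the code `ker φ`
  obtain ⟨e, he, hφe⟩ := hw
  have hcode : w - e ∈ ({v | v - w ∈ E} ∩ LinearMap.ker φ : Set (ι → R)) :=
    ⟨by simpa using E.neg_mem he, by simp [hφe]⟩
  obtain ⟨a, ha, b, hb, hab⟩ := hii _ ⟨w, rfl⟩ ⟨_, hcode⟩ x
  have hwa : H.Reachable w a := (hi a w ha).symm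
  have hbw : H.Reachable (b + Pi.single x 1) (w + Pi.single x 1) :=
    hi _ _ (by simpa only [add_sub_add_right_eq_sub, Set.mem_ofPred_eq] using hb)
  exact (hwa.trans hab.reachable).trans hbw

end SmallCubes

section SmallCubesF2

variable {ι V : Type*} [DecidableEq ι] [AddCommGroup V] [Module (ZMod 2) V]
  {φ : (ι → ZMod 2) →ₗ[ZMod 2] V} {E : Submodule (ZMod 2) (ι → ZMod 2)}
  {H : SimpleGraph (ι → ZMod 2)}

theorem reachable_add_single_of_add_mem_map (hi : SmallCubesConnected H E)
    (hii : SmallCubesLinked H E φ)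
    {w : ι → ZMod 2} {x : ι} (hw : φ (w + Pi.single x 1) ∈ E.map φ) :
    H.Reachable w (w + Pi.single x 1) := by
  simpa only [add_assoc, ZModModule.add_self, add_zero] using
    (reachable_add_single_of_mem_map hi hii hw x).symm

theorem single_mem_reachableShifts (hi : SmallCubesConnected H E)
    (hii : SmallCubesLinked H E φ)
    {x : ι} (hx : φ (Pi.single x 1) ∈ E.map φ) :
    Pi.single x 1 ∈ reachableShifts H ((E.map φ).comap φ).toAddSubgroup :=
  ⟨hx, fun _ hw => reachable_add_single_of_mem_map hi hii hw x⟩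

theorem single_sub_single_mem_reachableShifts (hi : SmallCubesConnected H E)
    (hii : SmallCubesLinked H E φ)
    {x y : ι} (hxy : φ (Pi.single x 1) - φ (Pi.single y 1) ∈ E.map φ) :
    Pi.single x 1 - Pi.single y 1 ∈ reachableShifts H ((E.map φ).comap φ).toAddSubgroup := by
  refine ⟨by simpa only [Submodule.mem_toAddSubgroup, Submodule.mem_comap, map_sub] using hxy,
    fun w hw => ?_⟩
  have hwxy : φ (w + Pi.single x 1 + Pi.single y 1) ∈ E.map φ := by
    rw [add_assoc, ← ZModModule.sub_eq_add (Pi.single x 1), map_add, map_sub]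
    exact (E.map φ).add_mem hw hxy
  rw [ZModModule.sub_eq_add, ← add_assoc]
  exact (reachable_add_single_of_mem_map hi hii hw x).trans
    (reachable_add_single_of_add_mem_map hi hii hwxy)

theorem sub_mem_reachableShifts [Fintype ι] [DecidableEq (V ⧸ E.map φ)]
    (hi : SmallCubesConnected H E) (hii : SmallCubesLinked H E φ) {u v : ι → ZMod 2}
    (huv : ∀ t ≠ 0, ∑ x, (if (E.map φ).mkQ (φ (Pi.single x 1)) = t then u x else 0) =
      ∑ x, (if (E.map φ).mkQ (φ (Pi.single x 1)) = t then v x else 0)) :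
    v - u ∈ reachableShifts H ((E.map φ).comap φ).toAddSubgroup := by
  refine (AddSubgroup.mem_toZModSubmodule 2).mp (mem_of_fiber_sums_eq_zero
      (fun x => (E.map φ).mkQ (φ (Pi.single x 1))) _ (fun x hx => ?_) (fun x y hxy => ?_)
      (fun t ht => ?_))
  · exact single_mem_reachableShifts hi hii ((Submodule.Quotient.mk_eq_zero _).mp hx)
  · exact single_sub_single_mem_reachableShifts hi hii ((Submodule.Quotient.eq _).mp hxy)
  · have huvt := huv t ht
    simp only [← Finset.sum_filter, Pi.sub_apply, Finset.sum_sub_distrib] at huvt ⊢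
    rw [huvt, sub_self]

theorem reachable_of_sub_mem_reachableShifts (hi : SmallCubesConnected H E)
    (hii : SmallCubesLinked H E φ) {u v : ι → ZMod 2}
    (huv : v - u ∈ reachableShifts H ((E.map φ).comap φ).toAddSubgroup)
    (hu : φ u ∈ E.map φ ∨ ∃ x, φ u - φ (Pi.single x 1) ∈ E.map φ) :
    H.Reachable u v := by
  obtain hu | ⟨x, hux⟩ := hu
  · simpa using huv.2 u hu
  have hue : φ (u + Pi.single x 1) ∈ E.map φ := by rwa [map_add, ← ZModModule.sub_eq_add]
  have hve : φ (v + Pi.single x 1) ∈ E.map φ := by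
    rw [show v + Pi.single x 1 = u + Pi.single x 1 + (v - u) by abel, map_add]
    exact add_mem hue huv.1
  have hshift := huv.2 _ hue
  rw [show u + Pi.single x 1 + (v - u) = v + Pi.single x 1 by abel] at hshift
  exact ((reachable_add_single_of_add_mem_map hi hii hue).trans hshift).trans
    (reachable_add_single_of_add_mem_map hi hii hve).symm

end SmallCubesF2

open scoped Classical in
theorem statement11_general (k : ℕ)
    (X : Finset (Fin k → ZMod 2))
    (D : Finset (Fin k → ZMod 2)) (hDX : D ⊆ X)
    (W : Submodule (ZMod 2) (Fin k → ZMod 2))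
    (hW : W = Submodule.span (ZMod 2) (D : Set (Fin k → ZMod 2)))
    (spanB : Submodule (ZMod 2) ({x // x ∈ X} → ZMod 2))
    (hspanB : spanB = Submodule.span (ZMod 2)
      {v | ∃ x : {x // x ∈ X}, (x : Fin k → ZMod 2) ∈ D ∧ v = Pi.single x (1 : ZMod 2)})
    (C : Set ({x // x ∈ X} → ZMod 2))
    (hC : C = {u | ∑ x : {x // x ∈ X}, u x • (x : Fin k → ZMod 2) = 0})
    (hA : ∀ t : (Fin k → ZMod 2) ⧸ W, t ≠ 0 →
      ∃ x ∈ X, (Submodule.Quotient.mk x : (Fin k → ZMod 2) ⧸ W) = t)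
    (H : SimpleGraph ({x // x ∈ X} → ZMod 2))
    (hi : ∀ u v : {x // x ∈ X} → ZMod 2, u - v ∈ spanB → H.Reachable u v)
    (hii : ∀ S : Set ({x // x ∈ X} → ZMod 2), (∃ u₀, S = {v | v - u₀ ∈ spanB}) →
      (S ∩ C).Nonempty → ∀ x : {x // x ∈ X},
        ∃ u ∈ S, ∃ w ∈ S, H.Adj u (w + Pi.single x 1)) :
    ∀ f : {t : (Fin k → ZMod 2) ⧸ W // t ≠ 0} → ZMod 2,
      ∀ u ∈ {u : {x // x ∈ X} → ZMod 2 |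
          ∀ t : {t : (Fin k → ZMod 2) ⧸ W // t ≠ 0},
            (∑ x : {x // x ∈ X},
              if (Submodule.Quotient.mk (x : Fin k → ZMod 2) : (Fin k → ZMod 2) ⧸ W)
                  = (t : (Fin k → ZMod 2) ⧸ W)
              then u x else 0) = f t},
        ∀ v ∈ {u : {x // x ∈ X} → ZMod 2 |
          ∀ t : {t : (Fin k → ZMod 2) ⧸ W // t ≠ 0},
            (∑ x : {x // x ∈ X},
              if (Submodule.Quotient.mk (x : Fin k → ZMod 2) : (Fin k → ZMod 2) ⧸ W)
                  = (t : (Fin k → ZMod 2) ⧸ W)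
              then u x else 0) = f t},
          H.Reachable u v := by
  intro f u hu v hv
  set φ := Fintype.linearCombination (ZMod 2) (fun x : {x // x ∈ X} => (x : Fin k → ZMod 2))
  have hφ_single : ∀ x, φ (Pi.single x 1) = x := fun x => by
    rw [Fintype.linearCombination_apply_single, one_smul]
  have hWE : W = spanB.map φ := by
    rw [hW, hspanB]
    exact (map_linearCombination_span_single _ _ fun y hy => ⟨⟨y, hDX hy⟩, rfl⟩).symm
  have hCE : C = LinearMap.ker φ := by
    ext u
    simp [hC, φ, Fintype.linearCombination_apply]
  subst hWE hCE
  have hu_class : φ u ∈ spanB.map φ ∨ ∃ x, φ u - φ (Pi.single x 1) ∈ spanB.map φ := by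
    refine or_iff_not_imp_left.mpr fun hu0 => ?_
    obtain ⟨x, hx, hxu⟩ := hA _ (mt (Submodule.Quotient.mk_eq_zero _).mp hu0)
    exact ⟨⟨x, hx⟩, by rw [hφ_single]; exact (Submodule.Quotient.eq _).mp hxu.symm⟩
  refine reachable_of_sub_mem_reachableShifts hi hii
    (sub_mem_reachableShifts hi hii fun t ht => ?_) hu_class
  simp only [Submodule.mkQ_apply, hφ_single]
  exact (hu ⟨t, ht⟩).trans (hv ⟨t, ht⟩).symm

open scoped Classical in
/-- Assume condition (A), and let `H` be a spanning subgraph of `Q_X` such that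
(i) any two vertices in a common small cube lie in the same component of `H`, and
(ii) for every small cube `S` meeting the Hamming code `C` and every direction
`x ∈ X`, some edge of `H` joins a vertex of `S` to a vertex of `S + b(x)`.
Then for every `f ∈ 𝔽₂^{U*}`, any two vertices of `T_f` lie in the same component
of `H`. -/
theorem statement11 (k d : ℕ) (hk : 1 ≤ k)
    (X : Finset (Fin k → ZMod 2)) (hX0 : (0 : Fin k → ZMod 2) ∉ X)
    (hXcard : X.card = d)
    (D : Finset (Fin k → ZMod 2)) (hDX : D ⊆ X)
    (W : Submodule (ZMod 2) (Fin k → ZMod 2))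
    (hW : W = Submodule.span (ZMod 2) (D : Set (Fin k → ZMod 2)))
    (spanB : Submodule (ZMod 2) ({x // x ∈ X} → ZMod 2))
    (hspanB : spanB = Submodule.span (ZMod 2)
      {v | ∃ x : {x // x ∈ X}, (x : Fin k → ZMod 2) ∈ D ∧ v = Pi.single x (1 : ZMod 2)})
    (C : Set ({x // x ∈ X} → ZMod 2))
    (hC : C = {u | ∑ x : {x // x ∈ X}, u x • (x : Fin k → ZMod 2) = 0})
    (hA : ∀ t : (Fin k → ZMod 2) ⧸ W, t ≠ 0 →
      ∃ x ∈ X, (Submodule.Quotient.mk x : (Fin k → ZMod 2) ⧸ W) = t)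
    (H : SimpleGraph ({x // x ∈ X} → ZMod 2))
    (hHsub : H ≤ hypercube {x // x ∈ X})
    (hi : ∀ u v : {x // x ∈ X} → ZMod 2, u - v ∈ spanB → H.Reachable u v)
    (hii : ∀ S : Set ({x // x ∈ X} → ZMod 2), (∃ u₀, S = {v | v - u₀ ∈ spanB}) →
      (S ∩ C).Nonempty → ∀ x : {x // x ∈ X},
        ∃ u ∈ S, ∃ w ∈ S, H.Adj u (w + Pi.single x 1)) :
    ∀ f : {t : (Fin k → ZMod 2) ⧸ W // t ≠ 0} → ZMod 2,
      ∀ u ∈ {u : {x // x ∈ X} → ZMod 2 |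
          ∀ t : {t : (Fin k → ZMod 2) ⧸ W // t ≠ 0},
            (∑ x : {x // x ∈ X},
              if (Submodule.Quotient.mk (x : Fin k → ZMod 2) : (Fin k → ZMod 2) ⧸ W)
                  = (t : (Fin k → ZMod 2) ⧸ W)
              then u x else 0) = f t},
        ∀ v ∈ {u : {x // x ∈ X} → ZMod 2 |
          ∀ t : {t : (Fin k → ZMod 2) ⧸ W // t ≠ 0},
            (∑ x : {x // x ∈ X},
              if (Submodule.Quotient.mk (x : Fin k → ZMod 2) : (Fin k → ZMod 2) ⧸ W)
                  = (t : (Fin k → ZMod 2) ⧸ W)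
              then u x else 0) = f t},
          H.Reachable u v :=
  statement11_general k X D hDX W hW spanB hspanB C hC hA H hi hii
end
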